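/- arXiv:2306.06606 — 3 statements merged into one kernel-verified Lean document; each statement's English description precedes it below -/
import Mathlib

section
/- Let G be a group, (ℓ²(G), λ_G) its left regular representation, and r: G → ℓ²(G) a proper array (π_g r(g⁻¹) = -r(g), sup_h ‖r(gh) - λ_G(g)r(h)‖ < ∞ for each g, and {g : ‖r(g)‖ ≤ N} finite for each N). Fix n ∈ ℕ and set F = {g : ‖r(g)‖ < n}. Define r'(g) = n·(1_{g} - 1_{1}) for g ∈ F and r'(g) = r(g) otherwise. Then r' is a proper array satisfying ‖r'(g)‖ ≥ n for all g ≠ 1. -/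
open scoped Classical

/-- The `ℓ²`-norm of a function `f : G → ℝ`. -/
noncomputable def l2Norm {G : Type*} (f : G → ℝ) : ℝ :=
  Real.sqrt (∑' x : G, (f x) ^ 2)

/-- The left regular representation of `G` on functions `G → ℝ`. -/
def lamG {G : Type*} [Group G] (g : G) (f : G → ℝ) : G → ℝ :=
  fun x => f (g⁻¹ * x)

/-- The indicator function of a singleton `{g}` in `ℓ²(G)`. -/
noncomputable def ind {G : Type*} (g : G) : G → ℝ := fun x => if x = g then 1 else 0

/-!
Since `‖r(g)‖` tends to infinity, the set `F` where `r` is modified is finite. Off `F` nothing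
changes, so properness survives; on `F` the difference `r' - r` takes finitely many values, so it
is uniformly bounded and the defect `r'(gh) - λ_g r'(h)` differs from that of `r` by at most twice
this bound. The new values `n (1_g - 1_1)` are antisymmetric because `λ_g 1_{g⁻¹} = 1_1` and
`λ_g 1_1 = 1_g`, and their norm is at least `n` because their value at `g ≠ 1` is `n`.
-/

section L2

variable {G : Type*}

lemma memℓp_two_iff_summable_sq {f : G → ℝ} : Memℓp f 2 ↔ Summable fun x => f x ^ 2 := by
  rw [memℓp_gen_iff (by norm_num)]
  norm_num [Real.norm_eq_abs, sq_abs]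

lemma l2Norm_eq_norm {f : G → ℝ} (hf : Memℓp f 2) :
    l2Norm f = ‖(⟨f, hf⟩ : lp (fun _ : G => ℝ) 2)‖ := by
  rw [lp.norm_eq_tsum_rpow (by norm_num), l2Norm, Real.sqrt_eq_rpow]
  norm_num [Real.norm_eq_abs, sq_abs]

lemma l2Norm_add_le {f f' : G → ℝ} (hf : Memℓp f 2) (hf' : Memℓp f' 2) :
    l2Norm (f + f') ≤ l2Norm f + l2Norm f' := by
  rw [l2Norm_eq_norm hf, l2Norm_eq_norm hf', l2Norm_eq_norm (hf.add hf')]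
  exact norm_add_le (⟨f, hf⟩ : lp (fun _ : G => ℝ) 2) ⟨f', hf'⟩

lemma l2Norm_neg (f : G → ℝ) : l2Norm (-f) = l2Norm f := by
  simp [l2Norm]

lemma l2Norm_zero : l2Norm (0 : G → ℝ) = 0 := by
  simp [l2Norm]

lemma abs_le_l2Norm {f : G → ℝ} (hf : Summable fun x => f x ^ 2) (x : G) :
    |f x| ≤ l2Norm f :=
  Real.abs_le_sqrt (hf.le_tsum x fun y _ => sq_nonneg (f y))

lemma memℓp_ind (a : G) : Memℓp (ind a) 2 := by
  have h : ind a = Pi.single a 1 := by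
    funext x
    simp [ind, Pi.single_apply]
  rw [h, ← lp.coeFn_single]
  exact (lp.single 2 a 1).prop

end L2

section RegularRepresentation

variable {G : Type*} [Group G]

lemma l2Norm_lamG (g : G) (f : G → ℝ) : l2Norm (lamG g f) = l2Norm f :=
  congrArg Real.sqrt ((Equiv.mulLeft g⁻¹).tsum_eq fun y => f y ^ 2)

lemma Memℓp.lamG {f : G → ℝ} (hf : Memℓp f 2) (g : G) : Memℓp (lamG g f) 2 :=
  memℓp_two_iff_summable_sq.2 <|
    ((Equiv.mulLeft g⁻¹).summable_iff (f := fun y => f y ^ 2)).2 (memℓp_two_iff_summable_sq.1 hf)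

lemma lamG_ind (g a : G) : lamG g (ind a) = ind (g * a) := by
  funext x
  simp [lamG, ind, inv_mul_eq_iff_eq_mul]

lemma lamG_smul_ind_inv_sub_ind_one (c : ℝ) (g : G) :
    lamG g (c • (ind g⁻¹ - ind 1)) = -(c • (ind g - ind 1)) := by
  change c • (lamG g (ind g⁻¹) - lamG g (ind 1)) = _
  rw [lamG_ind, lamG_ind, mul_inv_cancel, mul_one, smul_sub, smul_sub, neg_sub]

lemma le_l2Norm_smul_ind_sub_ind_one {c : ℝ} (hc : 0 ≤ c) {g : G} (hg : g ≠ 1) :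
    c ≤ l2Norm (c • (ind g - ind 1)) := by
  have hmem := ((memℓp_ind g).sub (memℓp_ind 1)).const_smul c
  simpa [ind, hg, abs_of_nonneg hc] using abs_le_l2Norm (memℓp_two_iff_summable_sq.1 hmem) g

lemma l2Norm_inv_eq_of_antisymm {r : G → G → ℝ} (hanti : ∀ g, lamG g (r g⁻¹) = -r g) (g : G) :
    l2Norm (r g⁻¹) = l2Norm (r g) := by
  rw [← l2Norm_lamG g, hanti, l2Norm_neg]

end RegularRepresentation

section Perturbation

variable {G : Type*} {r s : G → G → ℝ}

lemma exists_l2Norm_sub_le_of_finite_ne (hfin : {k | s k ≠ r k}.Finite) :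
    ∃ M, ∀ k, l2Norm (s k - r k) ≤ M := by
  obtain ⟨M, hM⟩ := (hfin.image fun k => l2Norm (s k - r k)).bddAbove
  refine ⟨max M 0, fun k => ?_⟩
  by_cases hk : s k = r k
  · rw [hk, sub_self, l2Norm_zero]
    exact le_max_right M 0
  · exact le_max_of_le_left (hM ⟨k, hk, rfl⟩)

lemma proper_of_finite_ne (hfin : {k | s k ≠ r k}.Finite)
    (hproper : ∀ N : ℝ, {g | l2Norm (r g) ≤ N}.Finite) (N : ℝ) :
    {g | l2Norm (s g) ≤ N}.Finite := by
  refine (hfin.union (hproper N)).subset fun g hg => ?_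
  by_cases hgs : s g = r g
  · exact Or.inr (by rwa [Set.mem_ofPred_eq, ← hgs])
  · exact Or.inl hgs

variable [Group G]

lemma array_of_bounded_perturbation (hr : ∀ k, Memℓp (r k) 2) (hd : ∀ k, Memℓp (s k - r k) 2)
    {M : ℝ} (hM : ∀ k, l2Norm (s k - r k) ≤ M)
    (harray : ∀ g, ∃ C, ∀ h, l2Norm (r (g * h) - lamG g (r h)) ≤ C) (g : G) :
    ∃ C, ∀ h, l2Norm (s (g * h) - lamG g (s h)) ≤ C := by
  obtain ⟨C, hC⟩ := harray g
  refine ⟨C + M + M, fun h => ?_⟩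
  have hdefect := (hr (g * h)).sub ((hr h).lamG g)
  have hsplit : s (g * h) - lamG g (s h) =
      (r (g * h) - lamG g (r h)) + (s (g * h) - r (g * h)) + -lamG g (s h - r h) := by
    funext x
    simp only [Pi.add_apply, Pi.sub_apply, Pi.neg_apply, lamG]
    ring
  calc l2Norm (s (g * h) - lamG g (s h))
      ≤ l2Norm (r (g * h) - lamG g (r h)) + l2Norm (s (g * h) - r (g * h))
          + l2Norm (-lamG g (s h - r h)) := by
        rw [hsplit]
        refine (l2Norm_add_le (hdefect.add (hd _)) ((hd h).lamG g).neg).trans ?_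
        gcongr
        exact l2Norm_add_le hdefect (hd _)
    _ ≤ C + M + M := by
        rw [l2Norm_neg, l2Norm_lamG]
        gcongr
        exacts [hC h, hM _, hM h]

end Perturbation

theorem modified_proper_array_general (G : Type*) [Group G]
    (r : G → G → ℝ)
    (hl2 : ∀ g : G, Summable fun x => (r g x) ^ 2)
    (hanti : ∀ g : G, lamG g (r g⁻¹) = -r g)
    (harray : ∀ g : G, ∃ C : ℝ, ∀ h : G, l2Norm (r (g * h) - lamG g (r h)) ≤ C)
    (hproper : ∀ N : ℝ, {g : G | l2Norm (r g) ≤ N}.Finite)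
    (n : ℕ)
    (r' : G → G → ℝ)
    (hr' : ∀ g : G, r' g =
      if l2Norm (r g) < n then (n : ℝ) • (ind g - ind (1 : G)) else r g) :
    (∀ g : G, lamG g (r' g⁻¹) = -r' g) ∧
    (∀ g : G, ∃ C : ℝ, ∀ h : G, l2Norm (r' (g * h) - lamG g (r' h)) ≤ C) ∧
    (∀ N : ℝ, {g : G | l2Norm (r' g) ≤ N}.Finite) ∧
    (∀ g : G, g ≠ 1 → (n : ℝ) ≤ l2Norm (r' g)) := by
  have hmem (g : G) : Memℓp (r g) 2 := memℓp_two_iff_summable_sq.2 (hl2 g)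
  have hmem' (g : G) : Memℓp (r' g) 2 := by
    rw [hr' g]
    split_ifs
    exacts [((memℓp_ind g).sub (memℓp_ind 1)).const_smul _, hmem g]
  have hfin : {g | r' g ≠ r g}.Finite :=
    (hproper n).subset fun g hg => by
      by_contra hlarge
      exact hg (by rw [hr' g, if_neg fun h => hlarge (le_of_lt h)])
  obtain ⟨M, hM⟩ := exists_l2Norm_sub_le_of_finite_ne hfin
  refine ⟨fun g => ?_, array_of_bounded_perturbation hmem (fun k => (hmem' k).sub (hmem k)) hM
    harray, proper_of_finite_ne hfin hproper, fun g hg => ?_⟩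
  · rw [hr' g, hr' g⁻¹, l2Norm_inv_eq_of_antisymm hanti g]
    split_ifs
    exacts [lamG_smul_ind_inv_sub_ind_one _ g, hanti g]
  · rw [hr' g]
    split_ifs with hsmall
    exacts [le_l2Norm_smul_ind_sub_ind_one n.cast_nonneg hg, not_lt.1 hsmall]

/-- Modifying a proper array `r : G → ℓ²(G)` on the finite set
`F = {g : ‖r g‖ < n}` by `r'(g) = n·(1_g - 1_1)` yields a proper array `r'`
with `‖r'(g)‖ ≥ n` for every `g ≠ 1`. -/
theorem modified_proper_array (G : Type*) [Group G] [Countable G]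
    (r : G → G → ℝ)
    (hl2 : ∀ g : G, Summable fun x => (r g x) ^ 2)
    (hanti : ∀ g : G, lamG g (r g⁻¹) = -r g)
    (harray : ∀ g : G, ∃ C : ℝ, ∀ h : G, l2Norm (r (g * h) - lamG g (r h)) ≤ C)
    (hproper : ∀ N : ℝ, {g : G | l2Norm (r g) ≤ N}.Finite)
    (n : ℕ)
    (r' : G → G → ℝ)
    (hr' : ∀ g : G, r' g =
      if l2Norm (r g) < n then (n : ℝ) • (ind g - ind (1 : G)) else r g) :
    (∀ g : G, lamG g (r' g⁻¹) = -r' g) ∧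
    (∀ g : G, ∃ C : ℝ, ∀ h : G, l2Norm (r' (g * h) - lamG g (r' h)) ≤ C) ∧
    (∀ N : ℝ, {g : G | l2Norm (r' g) ≤ N}.Finite) ∧
    (∀ g : G, g ≠ 1 → (n : ℝ) ≤ l2Norm (r' g)) :=
  modified_proper_array_general G r hl2 hanti harray hproper n r' hr'
end

section
/- Let Λ be a graph whose vertex set is a countable set X, in which every vertex has degree at most N. Let {Λᵢ}_{i∈I} be the connected components of Λ, and for a symmetric set of relations R over alphabet X in which any two letters occurring in a common relation are adjacent in Λ, define Rᵢ = {r ∈ R : some letter of r lies in V(Λᵢ)}. Then R = ⊔_{i∈I} Rᵢ is a disjoint union, and the group ⟨X | R⟩ is isomorphic to the free product ∗_{i∈I} ⟨V(Λᵢ) | Rᵢ⟩. -/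
open scoped Classical

/-- The letter `x` occurs in the reduced word of `r ∈ F(X)`. -/
noncomputable def occursIn {X : Type*} (x : X) (r : FreeGroup X) : Prop :=
  x ∈ (FreeGroup.toWord r).map Prod.fst

/-- The co-occurrence graph of a set of relations `R`: vertices are letters, and two
distinct letters are adjacent iff they occur in a common relation. -/
noncomputable def coGraph {X : Type*} (R : Set (FreeGroup X)) : SimpleGraph X where
  Adj x y := x ≠ y ∧ ∃ r ∈ R, occursIn x r ∧ occursIn y r
  symm := by
    constructor
    rintro x y ⟨hxy, r, hr, hx, hy⟩
    exact ⟨hxy.symm, r, hr, hy, hx⟩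
  loopless := by constructor; rintro x ⟨hx, -⟩; exact hx rfl

/-- The relations supported on the connected component `i` of the co-occurrence graph,
viewed in the free group on the vertices of that component. -/
noncomputable def compRels {X : Type*} (R : Set (FreeGroup X))
    (i : (coGraph R).ConnectedComponent) :
    Set (FreeGroup {x : X // (coGraph R).connectedComponentMk x = i}) :=
  {w | FreeGroup.map (Subtype.val) w ∈ R}

/-! Every relation `r ≠ 1` is a word in the letters it contains, and these all lie in one
component of the co-occurrence graph, so `r` comes from the free group on that component. Free
reduction only deletes letters, so the image of a word on one component contains no letter of
another, and no `r ≠ 1` comes from two components. Sending each letter to the generator of its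
component's factor therefore kills `R`, and is inverse to the map induced on the factors by the
inclusions of the components. -/

namespace FreeGroup

variable {X : Type*}

theorem exists_occursIn_of_ne_one {r : FreeGroup X} (hr : r ≠ 1) : ∃ x, occursIn x r := by
  obtain ⟨a, ha⟩ := List.exists_mem_of_ne_nil _ (mt toWord_eq_nil_iff.1 hr)
  exact ⟨a.1, List.mem_map_of_mem ha⟩

theorem occursIn_map_subtype_val {p : X → Prop} {w : FreeGroup (Subtype p)} {x : X}
    (hx : occursIn x (map Subtype.val w)) : p x := by
  have hsub : List.Sublist (map Subtype.val w).toWord (w.toWord.map fun a => (a.1.1, a.2)) := by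
    conv_lhs => rw [← mk_toWord (x := w), map.mk, toWord_mk]
    exact reduce.red.sublist
  have hx' := (hsub.map Prod.fst).subset hx
  rw [List.map_map] at hx'
  obtain ⟨a, -, rfl⟩ := List.mem_map.1 hx'
  exact a.1.2

theorem exists_map_subtype_val_eq {p : X → Prop} {r : FreeGroup X}
    (h : ∀ x, occursIn x r → p x) : ∃ w : FreeGroup (Subtype p), map Subtype.val w = r := by
  refine ⟨mk (r.toWord.pmap (fun a ha => (⟨a.1, ha⟩, a.2))
    fun a ha => h a.1 (List.mem_map_of_mem ha)), ?_⟩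
  rw [map.mk, List.map_pmap]
  simp [List.pmap_eq_map, mk_toWord]

end FreeGroup

namespace PresentedGroup

open Monoid

variable {X ι : Type*} (c : X → ι) (R : Set (FreeGroup X))

abbrev fibreRels (i : ι) : Set (FreeGroup {x // c x = i}) :=
  FreeGroup.map Subtype.val ⁻¹' R

def toCoprodI (x : X) : CoprodI fun i => PresentedGroup (fibreRels c R i) :=
  CoprodI.of (i := c x) (of ⟨x, rfl⟩)

theorem lift_toCoprodI_comp_map_subtype_val (i : ι) :
    (FreeGroup.lift (toCoprodI c R)).comp (FreeGroup.map (Subtype.val : {x // c x = i} → X)) =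
      (CoprodI.of (M := fun i => PresentedGroup (fibreRels c R i))).comp (mk _) :=
  FreeGroup.ext_hom _ _ fun ⟨_, hx⟩ => by subst hx; rfl

variable {c R}

theorem eq_iUnion_image_fibreRels
    (hR : ∀ r ∈ R, ∃ i, r ∈ Set.range (FreeGroup.map (Subtype.val : {x // c x = i} → X))) :
    R = ⋃ i, FreeGroup.map Subtype.val '' fibreRels c R i := by
  refine (Set.iUnion_subset fun i => Set.image_preimage_subset _ _).antisymm' fun r hr => ?_
  obtain ⟨i, w, rfl⟩ := hR r hr
  exact Set.mem_iUnion.2 ⟨i, w, hr, rfl⟩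

theorem pairwise_disjoint_image_fibreRels (hR : (1 : FreeGroup X) ∉ R) :
    Pairwise fun i j =>
      Disjoint (FreeGroup.map Subtype.val '' fibreRels c R i)
        (FreeGroup.map Subtype.val '' fibreRels c R j) := by
  intro i j hij
  refine Set.disjoint_left.2 ?_
  rintro _ ⟨w, hw, rfl⟩ ⟨v, -, hvw⟩
  obtain ⟨x, hx⟩ := FreeGroup.exists_occursIn_of_ne_one (r := FreeGroup.map Subtype.val w)
    (ne_of_mem_of_not_mem hw hR)
  have hxi := FreeGroup.occursIn_map_subtype_val (p := (c · = i)) hx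
  have hxj := FreeGroup.occursIn_map_subtype_val (p := (c · = j)) (hvw ▸ hx)
  exact hij (hxi.symm.trans hxj)

def mulEquivCoprodI
    (hR : ∀ r ∈ R, ∃ i, r ∈ Set.range (FreeGroup.map (Subtype.val : {x // c x = i} → X))) :
    PresentedGroup R ≃* CoprodI fun i => PresentedGroup (fibreRels c R i) :=
  MonoidHom.toMulEquiv
    (toGroup (f := toCoprodI c R) fun r hr => by
      obtain ⟨i, w, rfl⟩ := hR r hr
      rw [← MonoidHom.comp_apply, lift_toCoprodI_comp_map_subtype_val, MonoidHom.comp_apply,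
        one_of_mem (rels := fibreRels c R i) hr, map_one])
    (CoprodI.lift fun _ => PresentedGroup.map (FreeGroup.map Subtype.val) (Set.mapsTo_preimage _ _))
    (ext fun _ => rfl)
    (CoprodI.ext_hom _ _ fun _ => ext fun ⟨_, hx⟩ => by subst hx; rfl)

end PresentedGroup

section coGraph

variable {X : Type*} {R : Set (FreeGroup X)}

theorem connectedComponentMk_coGraph_eq_of_occursIn {r : FreeGroup X} (hr : r ∈ R) {x y : X}
    (hx : occursIn x r) (hy : occursIn y r) :
    (coGraph R).connectedComponentMk x = (coGraph R).connectedComponentMk y := by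
  rcases eq_or_ne x y with rfl | hxy
  · rfl
  · exact SimpleGraph.ConnectedComponent.sound (SimpleGraph.Adj.reachable ⟨hxy, r, hr, hx, hy⟩)

theorem exists_mem_range_map_of_mem {r : FreeGroup X} (hr : r ∈ R) (hr1 : r ≠ 1) :
    ∃ i : (coGraph R).ConnectedComponent, r ∈ Set.range
      (FreeGroup.map (Subtype.val : {x // (coGraph R).connectedComponentMk x = i} → X)) := by
  obtain ⟨y, hy⟩ := FreeGroup.exists_occursIn_of_ne_one hr1
  exact ⟨_, FreeGroup.exists_map_subtype_val_eq fun x hx =>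
    connectedComponentMk_coGraph_eq_of_occursIn hr hx hy⟩

end coGraph

theorem presentation_free_product_of_components_general
    (X : Type*) (R : Set (FreeGroup X)) (hone : (1 : FreeGroup X) ∉ R) :
    (R = ⋃ i : (coGraph R).ConnectedComponent,
        (FreeGroup.map (Subtype.val)) '' (compRels R i)) ∧
    (Pairwise fun i j : (coGraph R).ConnectedComponent =>
        Disjoint ((FreeGroup.map (Subtype.val)) '' (compRels R i))
          ((FreeGroup.map (Subtype.val)) '' (compRels R j))) ∧
    Nonempty (PresentedGroup R ≃*
      Monoid.CoprodI fun i : (coGraph R).ConnectedComponent =>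
        PresentedGroup (compRels R i)) := by
  have hsupp : ∀ r ∈ R, ∃ i : (coGraph R).ConnectedComponent, r ∈ Set.range
      (FreeGroup.map (Subtype.val : {x // (coGraph R).connectedComponentMk x = i} → X)) :=
    fun r hr => exists_mem_range_map_of_mem hr (ne_of_mem_of_not_mem hr hone)
  exact ⟨PresentedGroup.eq_iUnion_image_fibreRels hsupp,
    PresentedGroup.pairwise_disjoint_image_fibreRels hone,
    ⟨PresentedGroup.mulEquivCoprodI hsupp⟩⟩

/-- A group presentation splits as the free product of the presentations supported on
the connected components of its co-occurrence graph: the relation set is the disjoint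
union of the `compRels`, and `⟨X ∣ R⟩` is isomorphic to the free product
`∗ᵢ ⟨V(Λᵢ) ∣ Rᵢ⟩`. -/
theorem presentation_free_product_of_components
    (X : Type*) [Countable X] (R : Set (FreeGroup X)) (hone : (1 : FreeGroup X) ∉ R)
    (N : ℕ) (hdeg : ∀ x : X, {y : X | (coGraph R).Adj x y}.ncard ≤ N) :
    (R = ⋃ i : (coGraph R).ConnectedComponent,
        (FreeGroup.map (Subtype.val)) '' (compRels R i)) ∧
    (Pairwise fun i j : (coGraph R).ConnectedComponent =>
        Disjoint ((FreeGroup.map (Subtype.val)) '' (compRels R i))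
          ((FreeGroup.map (Subtype.val)) '' (compRels R j))) ∧
    Nonempty (PresentedGroup R ≃*
      Monoid.CoprodI fun i : (coGraph R).ConnectedComponent =>
        PresentedGroup (compRels R i)) :=
  presentation_free_product_of_components_general X R hone
end

section
/- Suppose (Gₙ)_{n∈ℕ} are countable groups, and for each n there is a map rₙ: Gₙ → ℓ²(Gₙ) with ‖rₙ(g)‖ ≥ n for all g ∈ Gₙ \ {1} and with {g ∈ Gₙ : ‖rₙ(g)‖ ≤ N} finite for each N. Let G = ∗_{n∈ℕ} Gₙ and for g ∈ G \ {1} with normal form g = h₁⋯h_m (hᵢ ∈ G_{nᵢ} \ {1}, nᵢ ≠ n_{i+1}), define R(g) ∈ ℓ²(G) ⊗ ℓ²(ℕ) by R(g) = ∑_{i=1}^{m} λ_G(h₀⋯h_{i-1}) rₙᵢ(hᵢ) ⊗ e_{nᵢ} (with h₀ = 1, rₙᵢ viewed in ℓ²(G)), and R(1) = 0. Then ‖R(g)‖² = ∑_{i=1}^{m} ‖r_{nᵢ}(hᵢ)‖², and the map R is proper: for every N, the set {g ∈ G : ‖R(g)‖ ≤ N} is finite. -/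
open scoped Classical

/-- The embedding of `ℓ²(Gₙ)` into functions on the free product `∗ₙ Gₙ`, induced by
the inclusion `Gₙ ↪ ∗ₙ Gₙ`. -/
noncomputable def embFn {G : ℕ → Type*} [∀ n, Group (G n)] (n : ℕ)
    (f : G n → ℝ) : Monoid.CoprodI G → ℝ :=
  fun x => if h : ∃ y : G n, Monoid.CoprodI.of y = x then f h.choose else 0

/-!
The `i`-th summand of `R(h₁⋯h_m)` is supported on the coset `(h₁⋯h_{i-1}) G_{nᵢ} × {nᵢ}`. Two
summands with `nᵢ = nⱼ`, `i < j`, have disjoint supports, because `j ≥ i + 2` and then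
`hᵢ⋯h_{j-1}` is a reduced word of length at least two, hence not in any factor. So the norm
identity is Pythagoras, each summand contributing `‖r_{nᵢ}(hᵢ)‖²`.

For properness, `‖R(g)‖ ≤ N` bounds every letter by `‖r_{nᵢ}(hᵢ)‖ ≤ N`, which leaves finitely
many possible letters (`nᵢ ≤ N`, and `r_{nᵢ}` is proper), and bounds `∑ nᵢ ≤ ∑ nᵢ² ≤ N²`.
Since consecutive indices differ, at most every other letter has index `0`, so the length is at
most `2N² + 1`. Finitely many letters and bounded length give finitely many normal forms.
-/

theorem Set.Finite.setOf_length_le_forall_mem {α : Type*} {s : Set α} (hs : s.Finite) (k : ℕ) :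
    {l : List α | l.length ≤ k ∧ ∀ x ∈ l, x ∈ s}.Finite := by
  have := hs.to_subtype
  refine ((List.finite_length_le s k).image (List.map Subtype.val)).subset ?_
  rintro l ⟨hl, hmem⟩
  exact ⟨l.attachWith (· ∈ s) hmem, by simpa using hl, by simp⟩

theorem List.length_le_two_mul_sum_add_one :
    ∀ {l : List ℕ}, l.IsChain (· ≠ ·) → l.length ≤ 2 * l.sum + 1
  | [], _ => by simp
  | [_], _ => by simp
  | a :: b :: t, hl => by
    obtain ⟨hab, hbt⟩ := List.isChain_cons_cons.mp hl
    have ih₁ := List.length_le_two_mul_sum_add_one hbt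
    have ih₂ := List.length_le_two_mul_sum_add_one hbt.tail
    simp only [List.length_cons, List.sum_cons, List.tail_cons] at ih₁ ih₂ ⊢
    omega

theorem hasSum_sq_sum_of_pairwise_disjoint_support {ι α : Type*} [Fintype ι]
    {F : ι → α → ℝ} {a : ι → ℝ} (hF : ∀ i, HasSum (fun p => F i p ^ 2) (a i))
    (hdisj : Pairwise fun i j => Disjoint (Function.support (F i)) (Function.support (F j))) :
    HasSum (fun p => (∑ i, F i p) ^ 2) (∑ i, a i) := by
  have hsq : ∀ p, (∑ i, F i p) ^ 2 = ∑ i, F i p ^ 2 := by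
    intro p
    by_cases hp : ∃ i, F i p ≠ 0
    · obtain ⟨i, hi⟩ := hp
      have hzero : ∀ j ≠ i, F j p = 0 := fun j hji =>
        Function.notMem_support.mp (Set.disjoint_right.mp (hdisj hji) hi)
      rw [Finset.sum_eq_single i (fun j _ hj => hzero j hj) (by simp),
        Finset.sum_eq_single i (fun j _ hj => by rw [hzero j hj, zero_pow two_ne_zero]) (by simp)]
    · push Not at hp
      simp [hp]
  simpa only [hsq] using hasSum_sum fun i _ => hF i

namespace Monoid.CoprodI

theorem Word.prod_notMem_range_of {ι : Type*} {M : ι → Type*} [∀ i, Monoid (M i)]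
    {w : Word M} (hw : 2 ≤ w.toList.length) (i : ι) :
    w.prod ∉ Set.range (of : M i →* CoprodI M) := by
  rintro ⟨x, hx⟩
  have hprod_inj : Function.Injective (Word.prod : Word M → CoprodI M) :=
    Word.equiv.symm.injective
  by_cases hx1 : x = 1
  · have hw_empty : Word.empty = w := hprod_inj (by rw [← hx, hx1, map_one, Word.prod_empty])
    simp [← hw_empty] at hw
  · have hw_single : Word.cons x Word.empty (by simp [Word.fstIdx]) hx1 = w :=
      hprod_inj (by simp [hx])
    simp [← hw_single] at hw

theorem Word.apply_prod_eq_sum_of_forall_ofFn {ι α : Type*} {M : ι → Type*}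
    [∀ i, Monoid (M i)] [AddCommMonoid α] {Φ : CoprodI M → α} {q : ∀ i, M i → α}
    (hΦ : ∀ (m : ℕ) (n : Fin m → ι) (_ : ∀ (i : Fin m) (hi : (i : ℕ) + 1 < m),
      n i ≠ n ⟨(i : ℕ) + 1, hi⟩) (h : ∀ i, M (n i)) (_ : ∀ i, h i ≠ 1),
      Φ (List.ofFn fun i => (of (h i) : CoprodI M)).prod = ∑ i, q (n i) (h i))
    (w : Word M) : Φ w.prod = (w.toList.map fun s => q s.1 s.2).sum := by
  have hΦw := hΦ w.toList.length (fun i => w.toList[(i : ℕ)].1)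
    (fun i hi => List.isChain_iff_getElem.mp w.chain_ne i hi) (fun i => w.toList[(i : ℕ)].2)
    (fun i => w.ne_one _ (List.getElem_mem _))
  rwa [← List.sum_ofFn, List.ofFn_getElem_eq_map w.toList fun s => (of s.2 : CoprodI M),
    List.ofFn_getElem_eq_map w.toList fun s => q s.1 s.2] at hΦw

theorem Word.finite_setOf_sum_le {M : ℕ → Type*} [∀ n, Monoid (M n)] {q : ∀ n, M n → ℝ}
    (hq : ∀ n (g : M n), g ≠ 1 → (n : ℝ) ^ 2 ≤ q n g)
    (hfin : ∀ n (C : ℝ), {g : M n | q n g ≤ C}.Finite) (C : ℝ) :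
    {w : Word M | (w.toList.map fun s => q s.1 s.2).sum ≤ C}.Finite := by
  set letters : Set (Σ n, M n) := ⋃ n ∈ Set.Iic ⌊C⌋₊, Sigma.mk n '' {g | q n g ≤ C}
  have hletters : letters.Finite :=
    (Set.finite_Iic _).biUnion fun n _ => (hfin n C).image _
  refine ((hletters.setOf_length_le_forall_mem ⌊2 * C + 1⌋₊).preimage
    (fun w _ v _ hwv => Word.ext hwv)).subset fun w hw => ?_
  simp only [Set.mem_ofPred_eq] at hw
  have hidx : ∀ s ∈ w.toList, (s.1 : ℝ) ≤ q s.1 s.2 := fun s hs =>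
    (by exact_mod_cast Nat.le_self_pow two_ne_zero s.1 : (s.1 : ℝ) ≤ s.1 ^ 2).trans
      (hq s.1 s.2 (w.ne_one s hs))
  have hq_nonneg : ∀ x ∈ w.toList.map fun s => q s.1 s.2, 0 ≤ x := by
    simp only [List.mem_map]
    rintro _ ⟨s, hs, rfl⟩
    exact (Nat.cast_nonneg _).trans (hidx s hs)
  have hidx_sum : ((w.toList.map Sigma.fst).sum : ℝ) ≤ C := by
    rw [Nat.cast_list_sum, List.map_map]
    exact (List.sum_le_sum hidx).trans hw
  have hlength := List.length_le_two_mul_sum_add_one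
    ((List.isChain_map Sigma.fst).mpr w.chain_ne)
  rw [List.length_map] at hlength
  refine ⟨Nat.le_floor ?_, fun s hs => ?_⟩
  · calc (w.toList.length : ℝ) ≤ 2 * ((w.toList.map Sigma.fst).sum : ℝ) + 1 := by
          exact_mod_cast hlength
      _ ≤ 2 * C + 1 := by linarith
  · have hqs : q s.1 s.2 ≤ C :=
      (List.single_le_sum hq_nonneg _ (List.mem_map_of_mem hs)).trans hw
    exact Set.mem_biUnion (Nat.le_floor ((hidx s hs).trans hqs)) ⟨s.2, hqs, rfl⟩

end Monoid.CoprodI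

open Monoid Monoid.CoprodI

section FreeProduct

variable {G : ℕ → Type*} [∀ n, Group (G n)]

theorem embFn_of (n : ℕ) (f : G n → ℝ) (x : G n) : embFn n f (of x) = f x := by
  have hx : ∃ y : G n, (of y : CoprodI G) = of x := ⟨x, rfl⟩
  rw [embFn, dif_pos hx, of_injective n hx.choose_spec]

theorem embFn_eq_zero_of_notMem_range {n : ℕ} (f : G n → ℝ) {v : CoprodI G}
    (hv : v ∉ Set.range (of : G n →* CoprodI G)) : embFn n f v = 0 :=
  dif_neg hv

/-- `λ_G(c) f ⊗ eₙ` for `f ∈ ℓ²(Gₙ) ⊆ ℓ²(G)`, with `ℓ²(G) ⊗ ℓ²(ℕ)` realised as functions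
on `G × ℕ`. -/
noncomputable def translateTensor (c : CoprodI G) (n : ℕ) (f : G n → ℝ) :
    CoprodI G × ℕ → ℝ :=
  fun p => if p.2 = n then embFn n f (c⁻¹ * p.1) else 0

theorem translateTensor_mul_of (c : CoprodI G) (n : ℕ) (f : G n → ℝ) (x : G n) :
    translateTensor c n f (c * of x, n) = f x := by
  simp [translateTensor, embFn_of]

theorem exists_of_translateTensor_ne_zero {c : CoprodI G} {n : ℕ} {f : G n → ℝ}
    {g : CoprodI G} {k : ℕ} (hne : translateTensor c n f (g, k) ≠ 0) :
    k = n ∧ ∃ x : G k, c * of x = g := by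
  unfold translateTensor at hne
  split_ifs at hne with hk
  · subst hk
    refine ⟨rfl, ?_⟩
    by_contra hg
    refine hne (embFn_eq_zero_of_notMem_range f ?_)
    rintro ⟨x, hx⟩
    exact hg ⟨x, by rw [hx, mul_inv_cancel_left]⟩
  · exact absurd rfl hne

theorem hasSum_translateTensor_sq (c : CoprodI G) (n : ℕ) {f : G n → ℝ}
    (hf : Summable fun x => f x ^ 2) :
    HasSum (fun p => translateTensor c n f p ^ 2) (∑' x, f x ^ 2) := by
  have hinj : Function.Injective fun x : G n => (c * of x, n) := fun x y hxy =>
    of_injective n (mul_left_cancel (congrArg Prod.fst hxy))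
  refine (hinj.hasSum_iff fun p hp => ?_).mp ?_
  · obtain ⟨g, k⟩ := p
    by_contra hne
    obtain ⟨rfl, x, rfl⟩ :=
      exists_of_translateTensor_ne_zero ((pow_ne_zero_iff two_ne_zero).mp hne)
    exact hp ⟨x, rfl⟩
  · simpa only [Function.comp_def, translateTensor_mul_of] using hf.hasSum

section NormalForm

variable {m : ℕ} {n : Fin m → ℕ}

noncomputable def prefixProd (h : ∀ i, G (n i)) (k : ℕ) : CoprodI G :=
  ((List.ofFn fun j => (of (h j) : CoprodI G)).take k).prod

theorem prefixProd_inv_mul_notMem_range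
    (hn : ∀ (i : Fin m) (hi : (i : ℕ) + 1 < m), n i ≠ n ⟨(i : ℕ) + 1, hi⟩)
    {h : ∀ i, G (n i)} (h1 : ∀ i, h i ≠ 1) {i j : Fin m} (hij : i < j) (hnij : n i = n j)
    (k : ℕ) : (prefixProd h i)⁻¹ * prefixProd h j ∉ Set.range (of : G k →* CoprodI G) := by
  set L := List.ofFn fun j => (⟨n j, h j⟩ : Σ k, G k)
  have hL1 : ∀ s ∈ L, s.2 ≠ 1 := by
    simp only [L, List.mem_ofFn]
    rintro _ ⟨i, rfl⟩
    exact h1 i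
  have hLchain : L.IsChain fun a b => a.1 ≠ b.1 := by
    refine List.isChain_iff_getElem.mpr fun k hk => ?_
    simp only [L, List.getElem_ofFn]
    simp only [L, List.length_ofFn] at hk
    exact hn ⟨k, by omega⟩ hk
  let w : Word G :=
    { toList := (L.take j).drop i
      ne_one := fun s hs => hL1 s (List.mem_of_mem_take (List.mem_of_mem_drop hs))
      chain_ne := hLchain.infix
        ((List.drop_suffix _ _).isInfix.trans (List.take_prefix _ _).isInfix) }
  have hj : (j : ℕ) ≠ i + 1 := fun hj =>
    hn i (by omega) (hnij.trans (congrArg n (Fin.ext hj)))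
  have hw : 2 ≤ w.toList.length := by
    simp only [w, L, List.length_drop, List.length_take, List.length_ofFn]
    omega
  have hprod : (prefixProd h i)⁻¹ * prefixProd h j = w.prod := by
    have hmap : (List.ofFn fun j => (of (h j) : CoprodI G)) = L.map fun s => of s.2 := by
      simp [L, List.map_ofFn, Function.comp_def]
    rw [inv_mul_eq_iff_eq_mul, prefixProd, prefixProd, hmap, ← List.map_take, ← List.map_take,
      ← List.take_append_drop i (L.take j), List.map_append, List.prod_append, List.take_take,
      min_eq_left (by omega), Word.prod, List.map_drop, List.map_take]
  exact hprod ▸ w.prod_notMem_range_of hw k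

theorem pairwise_disjoint_support_translateTensor_prefixProd
    (hn : ∀ (i : Fin m) (hi : (i : ℕ) + 1 < m), n i ≠ n ⟨(i : ℕ) + 1, hi⟩)
    {h : ∀ i, G (n i)} (h1 : ∀ i, h i ≠ 1) (f : ∀ i, G (n i) → ℝ) :
    Pairwise fun i j : Fin m =>
      Disjoint (Function.support (translateTensor (prefixProd h i) (n i) (f i)))
        (Function.support (translateTensor (prefixProd h j) (n j) (f j))) := by
  refine (Std.Symm.pairwise_on (r := Disjoint)
    fun i : Fin m => Function.support (translateTensor (prefixProd h i) (n i) (f i))).mpr ?_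
  intro i j hij
  refine Set.disjoint_left.mpr fun ⟨g, k⟩ hi hj => ?_
  obtain ⟨hki, x, hx⟩ := exists_of_translateTensor_ne_zero hi
  obtain ⟨hkj, y, hy⟩ := exists_of_translateTensor_ne_zero hj
  -- both supports meet the coset `g Gₖ`, so `(prefixProd h i)⁻¹ * prefixProd h j ∈ Gₖ`
  refine prefixProd_inv_mul_notMem_range hn h1 hij (hki.symm.trans hkj) k ⟨x * y⁻¹, ?_⟩
  rw [eq_mul_inv_of_mul_eq hx, eq_mul_inv_of_mul_eq hy, map_mul, map_inv]
  group

theorem hasSum_sq_sum_translateTensor_prefixProd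
    (hn : ∀ (i : Fin m) (hi : (i : ℕ) + 1 < m), n i ≠ n ⟨(i : ℕ) + 1, hi⟩)
    {h : ∀ i, G (n i)} (h1 : ∀ i, h i ≠ 1) {f : ∀ i, G (n i) → ℝ}
    (hf : ∀ i, Summable fun x => f i x ^ 2) :
    HasSum (fun p => (∑ i : Fin m, translateTensor (prefixProd h i) (n i) (f i) p) ^ 2)
      (∑ i, ∑' x, f i x ^ 2) :=
  hasSum_sq_sum_of_pairwise_disjoint_support
    (fun i => hasSum_translateTensor_sq _ _ (hf i))
    (pairwise_disjoint_support_translateTensor_prefixProd hn h1 f)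

end NormalForm

end FreeProduct

theorem free_product_array_proper_general
    (G : ℕ → Type*) [∀ n, Group (G n)]
    (r : ∀ n : ℕ, G n → (G n → ℝ))
    (hl2 : ∀ n (g : G n), Summable fun x => (r n g x) ^ 2)
    (hlow : ∀ n (g : G n), g ≠ 1 → (n : ℝ) ≤ Real.sqrt (∑' x : G n, (r n g x) ^ 2))
    (hprop : ∀ n (N : ℝ),
      {g : G n | Real.sqrt (∑' x : G n, (r n g x) ^ 2) ≤ N}.Finite)
    (R : Monoid.CoprodI G → (Monoid.CoprodI G × ℕ → ℝ))
    (hRform : ∀ (m : ℕ) (n : Fin m → ℕ)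
      (_ : ∀ (i : Fin m) (h : (i : ℕ) + 1 < m), n i ≠ n ⟨(i : ℕ) + 1, h⟩)
      (h : ∀ i : Fin m, G (n i)) (_ : ∀ i, h i ≠ 1),
      R ((List.ofFn fun i : Fin m => (Monoid.CoprodI.of (h i) : Monoid.CoprodI G)).prod)
        = fun p => ∑ i : Fin m,
            if p.2 = n i then
              embFn (n i) (r (n i) (h i))
                ((((List.ofFn fun j : Fin m =>
                    (Monoid.CoprodI.of (h j) : Monoid.CoprodI G)).take (i : ℕ)).prod)⁻¹
                  * p.1)
            else 0) :
    (∀ (m : ℕ) (n : Fin m → ℕ)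
      (_ : ∀ (i : Fin m) (h : (i : ℕ) + 1 < m), n i ≠ n ⟨(i : ℕ) + 1, h⟩)
      (h : ∀ i : Fin m, G (n i)) (_ : ∀ i, h i ≠ 1),
      (∑' p : Monoid.CoprodI G × ℕ,
          (R ((List.ofFn fun i : Fin m =>
              (Monoid.CoprodI.of (h i) : Monoid.CoprodI G)).prod) p) ^ 2)
        = ∑ i : Fin m, ∑' x : G (n i), (r (n i) (h i) x) ^ 2) ∧
    (∀ N : ℝ,
      {g : Monoid.CoprodI G |
        Real.sqrt (∑' p : Monoid.CoprodI G × ℕ, (R g p) ^ 2) ≤ N}.Finite) := by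
  have hnorm : ∀ (m : ℕ) (n : Fin m → ℕ)
      (_ : ∀ (i : Fin m) (h : (i : ℕ) + 1 < m), n i ≠ n ⟨(i : ℕ) + 1, h⟩)
      (h : ∀ i : Fin m, G (n i)) (_ : ∀ i, h i ≠ 1),
      (∑' p, (R (List.ofFn fun i => (of (h i) : CoprodI G)).prod p) ^ 2)
        = ∑ i, ∑' x, (r (n i) (h i) x) ^ 2 := fun m n hn h h1 => by
    rw [hRform m n hn h h1]
    exact (hasSum_sq_sum_translateTensor_prefixProd hn h1 fun i => hl2 (n i) (h i)).tsum_eq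
  refine ⟨hnorm, fun N => ?_⟩
  have hweight : ∀ n (g : G n), g ≠ 1 → (n : ℝ) ^ 2 ≤ ∑' x, (r n g x) ^ 2 := fun n g hg =>
    (Real.le_sqrt (Nat.cast_nonneg n) (tsum_nonneg fun _ => sq_nonneg _)).mp (hlow n g hg)
  have hfin : ∀ n (C : ℝ), {g : G n | ∑' x, (r n g x) ^ 2 ≤ C}.Finite := fun n C =>
    (hprop n (Real.sqrt C)).subset fun g hg => Real.sqrt_le_sqrt hg
  refine ((Word.finite_setOf_sum_le hweight hfin (N ^ 2)).image Word.prod).subset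
    fun g hg => ?_
  have hprod : (Word.equiv g).prod = g := Word.equiv.symm_apply_apply g
  have hsum := Word.apply_prod_eq_sum_of_forall_ofFn
    (Φ := fun g => ∑' p, (R g p) ^ 2) (q := fun n g => ∑' x, (r n g x) ^ 2) hnorm (Word.equiv g)
  refine ⟨Word.equiv g, ?_, hprod⟩
  simp only [Set.mem_ofPred_eq, ← hsum, hprod]
  exact (Real.sqrt_le_iff.mp hg).2

/-- The norm identity and properness of the array `R` on a free product `G = ∗ₙ Gₙ`
built from proper arrays `rₙ` on the factors with `‖rₙ(g)‖ ≥ n` for `g ≠ 1`: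
`R(h₁⋯h_m) = ∑ᵢ λ_G(h₀⋯h_{i-1}) r_{nᵢ}(hᵢ) ⊗ e_{nᵢ}` satisfies
`‖R(g)‖² = ∑ᵢ ‖r_{nᵢ}(hᵢ)‖²`, and `{g : ‖R(g)‖ ≤ N}` is finite for every `N`. -/
theorem free_product_array_proper
    (G : ℕ → Type*) [∀ n, Group (G n)] [∀ n, Countable (G n)]
    (r : ∀ n : ℕ, G n → (G n → ℝ))
    (hl2 : ∀ n (g : G n), Summable fun x => (r n g x) ^ 2)
    (hlow : ∀ n (g : G n), g ≠ 1 → (n : ℝ) ≤ Real.sqrt (∑' x : G n, (r n g x) ^ 2))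
    (hprop : ∀ n (N : ℝ),
      {g : G n | Real.sqrt (∑' x : G n, (r n g x) ^ 2) ≤ N}.Finite)
    (R : Monoid.CoprodI G → (Monoid.CoprodI G × ℕ → ℝ))
    (hR1 : R 1 = 0)
    (hRform : ∀ (m : ℕ) (n : Fin m → ℕ)
      (_ : ∀ (i : Fin m) (h : (i : ℕ) + 1 < m), n i ≠ n ⟨(i : ℕ) + 1, h⟩)
      (h : ∀ i : Fin m, G (n i)) (_ : ∀ i, h i ≠ 1),
      R ((List.ofFn fun i : Fin m => (Monoid.CoprodI.of (h i) : Monoid.CoprodI G)).prod)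
        = fun p => ∑ i : Fin m,
            if p.2 = n i then
              embFn (n i) (r (n i) (h i))
                ((((List.ofFn fun j : Fin m =>
                    (Monoid.CoprodI.of (h j) : Monoid.CoprodI G)).take (i : ℕ)).prod)⁻¹
                  * p.1)
            else 0) :
    (∀ (m : ℕ) (n : Fin m → ℕ)
      (_ : ∀ (i : Fin m) (h : (i : ℕ) + 1 < m), n i ≠ n ⟨(i : ℕ) + 1, h⟩)
      (h : ∀ i : Fin m, G (n i)) (_ : ∀ i, h i ≠ 1),
      (∑' p : Monoid.CoprodI G × ℕ,
          (R ((List.ofFn fun i : Fin m =>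
              (Monoid.CoprodI.of (h i) : Monoid.CoprodI G)).prod) p) ^ 2)
        = ∑ i : Fin m, ∑' x : G (n i), (r (n i) (h i) x) ^ 2) ∧
    (∀ N : ℝ,
      {g : Monoid.CoprodI G |
        Real.sqrt (∑' p : Monoid.CoprodI G × ℕ, (R g p) ^ 2) ≤ N}.Finite) :=
  free_product_array_proper_general G r hl2 hlow hprop R hRform
end
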